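/- Let 0 ≤ γ ≤ 1, let Q be a probability measure on ℝ with Q({0}) = 0, and let X be a random variable with law (1 − γ)δ₀ + γQ. Let N be a standard normal random variable independent of X, fix α > 0, and let η(x; θ) = (x − θ)·1{x ≥ θ} + (x + θ)·1{x ≤ −θ} denote the soft-thresholding function. Then, as τ → 0+, τ^{-2} · E[ (η(X + τN; ατ) − X)² ] → γ(1 + α²) + 2(1 − γ)·( (1 + α²)Φ(−α) − α·φ(α) ), where Φ and φ denote the standard normal cumulative distribution function and density. In particular (the case γ = 0), E[ η(τN; ατ)² ] = 2τ²·( (1 + α²)Φ(−α) − α·φ(α) ) for every τ > 0. -/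

import Mathlib

open MeasureTheory ProbabilityTheory Filter Real Set
open scoped NNReal ENNReal Topology

/-- Soft-thresholding function: `η(x; θ) = (x−θ)1{x ≥ θ} + (x+θ)1{x ≤ −θ}`. -/
noncomputable def softThr (x θ : ℝ) : ℝ :=
  if θ ≤ x then x - θ else if x ≤ -θ then x + θ else 0

/-- Standard normal density `φ(x) = (2π)^{-1/2} e^{-x²/2}`. -/
noncomputable def stdGaussPdf (x : ℝ) : ℝ :=
  (Real.sqrt (2 * Real.pi))⁻¹ * Real.exp (-(x ^ 2) / 2)

/-- Standard normal cumulative distribution function `Φ(x) = ∫_{−∞}^x φ`. -/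
noncomputable def stdGaussCdf (x : ℝ) : ℝ := ∫ t in Set.Iic x, stdGaussPdf t

lemma pdf_nonneg (x : ℝ) : 0 ≤ stdGaussPdf x := by
  unfold stdGaussPdf; positivity

lemma pdf_cont : Continuous stdGaussPdf := by
  unfold stdGaussPdf; fun_prop

lemma pdf_eq (x : ℝ) : stdGaussPdf x = (Real.sqrt (2 * Real.pi))⁻¹ * Real.exp (-(1/2) * x ^ 2) := by
  unfold stdGaussPdf; ring_nf

lemma pdf_even (x : ℝ) : stdGaussPdf (-x) = stdGaussPdf x := by
  unfold stdGaussPdf; ring_nf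

lemma pdf_funext : stdGaussPdf = fun x => (Real.sqrt (2 * Real.pi))⁻¹ * Real.exp (-(1/2) * x ^ 2) :=
  funext pdf_eq

lemma integrable_pdf : Integrable stdGaussPdf := by
  rw [pdf_funext]
  exact (integrable_exp_neg_mul_sq (by norm_num : (0:ℝ) < 1/2)).const_mul _

lemma integrable_mul_pdf : Integrable (fun x => x * stdGaussPdf x) := by
  simp_rw [pdf_eq]
  have := (integrable_mul_exp_neg_mul_sq (by norm_num : (0:ℝ) < 1/2)).const_mul
    (Real.sqrt (2 * Real.pi))⁻¹
  convert this using 2 with x; ring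

lemma integrable_sq_mul_pdf : Integrable (fun x => x ^ 2 * stdGaussPdf x) := by
  have h := (integrable_rpow_mul_exp_neg_mul_sq (by norm_num : (0:ℝ) < 1/2)
    (by norm_num : (-1:ℝ) < 2)).const_mul (Real.sqrt (2 * Real.pi))⁻¹
  rw [show (2:ℝ) = ((2:ℕ):ℝ) by norm_num] at h
  simp only [Real.rpow_natCast] at h
  simp_rw [pdf_eq]
  convert h using 2 with x
  ring

lemma hasDerivAt_pdf (x : ℝ) : HasDerivAt stdGaussPdf (-x * stdGaussPdf x) x := by
  unfold stdGaussPdf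
  have h1 : HasDerivAt (fun x : ℝ => -(x ^ 2) / 2) (-x) x := by
    have := ((hasDerivAt_pow 2 x).neg).div_const 2
    simpa using this.congr_deriv (by ring)
  have := (h1.exp).const_mul (Real.sqrt (2 * Real.pi))⁻¹
  exact this.congr_deriv (by ring)

lemma integral_pdf : ∫ x, stdGaussPdf x = 1 := by
  simp_rw [pdf_eq]
  rw [integral_const_mul, integral_gaussian]
  rw [show Real.pi / (1/2) = 2 * Real.pi by ring]
  exact inv_mul_cancel₀ (ne_of_gt (Real.sqrt_pos.2 (by positivity)))

lemma cdf_sub (x c : ℝ) : stdGaussCdf x - stdGaussCdf c = ∫ t in c..x, stdGaussPdf t := by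
  unfold stdGaussCdf
  rw [intervalIntegral.integral_Iic_sub_Iic integrable_pdf.integrableOn integrable_pdf.integrableOn]

lemma hasDerivAt_cdf (x : ℝ) : HasDerivAt stdGaussCdf (stdGaussPdf x) x := by
  have h : HasDerivAt (fun u => ∫ t in (0:ℝ)..u, stdGaussPdf t) (stdGaussPdf x) x :=
    intervalIntegral.integral_hasDerivAt_right
      (integrable_pdf.intervalIntegrable)
      (pdf_cont.stronglyMeasurableAtFilter _ _) pdf_cont.continuousAt
  have : stdGaussCdf = fun u => stdGaussCdf 0 + ∫ t in (0:ℝ)..u, stdGaussPdf t := by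
    funext u; rw [← cdf_sub u 0]; ring
  rw [this]
  simpa using (h.const_add (stdGaussCdf 0))

lemma tendsto_cdf_atTop : Tendsto stdGaussCdf atTop (𝓝 1) := by
  rw [← integral_pdf]
  unfold stdGaussCdf
  simp_rw [← integral_indicator measurableSet_Iic]
  apply tendsto_integral_filter_of_dominated_convergence stdGaussPdf
  · filter_upwards with x using
      ((integrable_pdf.aestronglyMeasurable).indicator measurableSet_Iic)
  · filter_upwards with x
    filter_upwards with t
    exact (norm_indicator_le_norm_self _ _).trans
      (le_of_eq (Real.norm_of_nonneg (pdf_nonneg t)))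
  · exact integrable_pdf
  · filter_upwards with t
    apply Tendsto.congr' _ tendsto_const_nhds
    filter_upwards [eventually_ge_atTop t] with x hx
    simp [Set.indicator_of_mem, hx]

lemma tendsto_cdf_atBot : Tendsto stdGaussCdf atBot (𝓝 0) := by
  have : (0:ℝ) = ∫ (_ : ℝ), (0:ℝ) := by simp
  rw [this]
  unfold stdGaussCdf
  simp_rw [← integral_indicator measurableSet_Iic]
  apply tendsto_integral_filter_of_dominated_convergence stdGaussPdf
  · filter_upwards with x using
      ((integrable_pdf.aestronglyMeasurable).indicator measurableSet_Iic)
  · filter_upwards with x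
    filter_upwards with t
    exact (norm_indicator_le_norm_self _ _).trans
      (le_of_eq (Real.norm_of_nonneg (pdf_nonneg t)))
  · exact integrable_pdf
  · filter_upwards with t
    apply Tendsto.congr' _ tendsto_const_nhds
    filter_upwards [eventually_lt_atBot t] with x hx
    simp [Set.indicator_of_notMem, not_le.mpr hx]

lemma tendsto_pdf_atTop : Tendsto stdGaussPdf atTop (𝓝 0) := by
  rw [pdf_funext]
  rw [show (0:ℝ) = (Real.sqrt (2 * Real.pi))⁻¹ * 0 by ring]
  apply Tendsto.const_mul
  apply Real.tendsto_exp_atBot.comp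
  have h1 : Tendsto (fun x:ℝ => (1/2) * x ^ 2) atTop atTop :=
    (tendsto_pow_atTop two_ne_zero).const_mul_atTop (by norm_num)
  have := tendsto_neg_atTop_atBot.comp h1
  exact this.congr (fun x => (neg_mul (1/2) (x^2)).symm)

lemma tendsto_mul_pdf_atTop : Tendsto (fun x => x * stdGaussPdf x) atTop (𝓝 0) := by
  have h := rpow_mul_exp_neg_mul_sq_isLittleO_exp_neg (by norm_num : (0:ℝ) < 1/2) 1
  have h2 : Tendsto (fun x : ℝ => Real.exp (-(1/2) * x)) atTop (𝓝 0) := by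
    apply Real.tendsto_exp_atBot.comp
    exact Tendsto.const_mul_atTop_of_neg (by norm_num) tendsto_id
  have h3 := h.trans_tendsto h2
  have h4 := h3.const_mul (Real.sqrt (2 * Real.pi))⁻¹
  rw [mul_zero] at h4
  apply h4.congr'
  filter_upwards [eventually_ge_atTop (0:ℝ)] with x hx
  rw [pdf_eq, Real.rpow_one]
  ring

lemma tendsto_pdf_atBot : Tendsto stdGaussPdf atBot (𝓝 0) := by
  have := tendsto_pdf_atTop.comp tendsto_neg_atBot_atTop
  exact this.congr (fun x => pdf_even x)

lemma tendsto_mul_pdf_atBot : Tendsto (fun x => x * stdGaussPdf x) atBot (𝓝 0) := by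
  have := (tendsto_mul_pdf_atTop.comp tendsto_neg_atBot_atTop).neg
  rw [neg_zero] at this
  apply this.congr (fun x => ?_)
  simp only [Function.comp_apply, pdf_even]
  ring

lemma integrable_shift_sq_mul_pdf (a : ℝ) :
    Integrable (fun x => (x - a) ^ 2 * stdGaussPdf x) := by
  have h := (integrable_sq_mul_pdf.sub (integrable_mul_pdf.const_mul (2*a))).add
    (integrable_pdf.const_mul (a^2))
  exact h.congr (ae_of_all _ (fun x => by simp only [Pi.add_apply, Pi.sub_apply]; ring))

lemma hasDerivAt_anti (a x : ℝ) :
    HasDerivAt (fun x => -(x - 2*a) * stdGaussPdf x + (1 + a^2) * stdGaussCdf x)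
      ((x - a)^2 * stdGaussPdf x) x := by
  have h1 : HasDerivAt (fun x : ℝ => -(x - 2*a)) (-1) x := by
    exact ((hasDerivAt_id x).sub_const (2*a)).neg
  have h2 := h1.mul (hasDerivAt_pdf x)
  have h3 := ((hasDerivAt_cdf x).const_mul (1 + a^2))
  have := h2.add h3
  exact this.congr_deriv (by ring)

lemma tendsto_anti_atTop (a : ℝ) :
    Tendsto (fun x => -(x - 2*a) * stdGaussPdf x + (1 + a^2) * stdGaussCdf x)
      atTop (𝓝 (1 + a^2)) := by
  have h1 : Tendsto (fun x => -(x - 2*a) * stdGaussPdf x) atTop (𝓝 0) := by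
    have := (tendsto_mul_pdf_atTop.neg).add ((tendsto_pdf_atTop.const_mul (2*a)))
    simp only [neg_zero, mul_zero, add_zero] at this
    exact this.congr (fun x => by ring)
  have h2 := tendsto_cdf_atTop.const_mul (1 + a^2)
  have := h1.add h2
  simpa using this

lemma tendsto_anti_atBot (a : ℝ) :
    Tendsto (fun x => -(x - 2*a) * stdGaussPdf x + (1 + a^2) * stdGaussCdf x)
      atBot (𝓝 0) := by
  have h1 : Tendsto (fun x => -(x - 2*a) * stdGaussPdf x) atBot (𝓝 0) := by
    have := (tendsto_mul_pdf_atBot.neg).add ((tendsto_pdf_atBot.const_mul (2*a)))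
    simp only [neg_zero, mul_zero, add_zero] at this
    exact this.congr (fun x => by ring)
  have h2 := tendsto_cdf_atBot.const_mul (1 + a^2)
  have := h1.add h2
  simpa using this

lemma tail_right (a : ℝ) :
    ∫ x in Ioi a, (x - a)^2 * stdGaussPdf x
      = (1 + a^2) * (1 - stdGaussCdf a) - a * stdGaussPdf a := by
  rw [integral_Ioi_of_hasDerivAt_of_tendsto' (fun x _ => hasDerivAt_anti a x)
    (integrable_shift_sq_mul_pdf a).integrableOn (tendsto_anti_atTop a)]
  ring

lemma tail_left (a : ℝ) :
    ∫ x in Iic (-a), (x + a)^2 * stdGaussPdf x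
      = (1 + a^2) * stdGaussCdf (-a) - a * stdGaussPdf a := by
  have key : ∀ x : ℝ, HasDerivAt (fun x => -(x - 2*(-a)) * stdGaussPdf x
      + (1 + (-a)^2) * stdGaussCdf x) ((x - (-a))^2 * stdGaussPdf x) x := fun x =>
    hasDerivAt_anti (-a) x
  have h := integral_Iic_of_hasDerivAt_of_tendsto' (a := -a) (fun x _ => key x)
    (integrable_shift_sq_mul_pdf (-a)).integrableOn (tendsto_anti_atBot (-a))
  simp only [sub_neg_eq_add] at h
  rw [h, pdf_even]
  ring

lemma cdf_neg (a : ℝ) : stdGaussCdf (-a) = 1 - stdGaussCdf a := by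
  have h1 : ∫ x in Ioi a, stdGaussPdf x = stdGaussCdf (-a) := by
    unfold stdGaussCdf
    have h := integral_comp_neg_Iic (-a) stdGaussPdf
    simp only [neg_neg] at h
    rw [← h]
    exact setIntegral_congr_fun measurableSet_Iic (fun x _ => pdf_even x)
  have h2 := intervalIntegral.integral_Iic_add_Ioi (b := a)
    integrable_pdf.integrableOn integrable_pdf.integrableOn
  rw [integral_pdf] at h2
  unfold stdGaussCdf at *
  linarith

lemma moment_one : ∫ x, x * stdGaussPdf x = 0 := by
  have key : ∀ x : ℝ, HasDerivAt (fun x => -stdGaussPdf x) (x * stdGaussPdf x) x := by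
    intro x
    exact (hasDerivAt_pdf x).neg.congr_deriv (by ring)
  rw [MeasureTheory.integral_of_hasDerivAt_of_tendsto key integrable_mul_pdf
    (tendsto_pdf_atBot.neg) (tendsto_pdf_atTop.neg)]
  simp

lemma moment_two : ∫ x, x ^ 2 * stdGaussPdf x = 1 := by
  have key : ∀ x : ℝ, HasDerivAt (fun x => -(x - 2*0) * stdGaussPdf x
      + (1 + 0^2) * stdGaussCdf x) ((x - 0)^2 * stdGaussPdf x) x := fun x => hasDerivAt_anti 0 x
  have h := MeasureTheory.integral_of_hasDerivAt_of_tendsto key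
    (integrable_shift_sq_mul_pdf 0) (tendsto_anti_atBot 0) (tendsto_anti_atTop 0)
  simp only [sub_zero] at h
  rw [h]; norm_num

lemma measurable_softThr {β : Type*} [MeasurableSpace β] {f : β → ℝ} (hf : Measurable f)
    (θ : ℝ) : Measurable fun b => softThr (f b) θ := by
  unfold softThr
  apply Measurable.ite (measurableSet_le measurable_const hf) (hf.sub measurable_const)
  exact Measurable.ite (measurableSet_le hf measurable_const) (hf.add measurable_const)
    measurable_const

lemma softThr_scale {τ : ℝ} (hτ : 0 < τ) (n θ : ℝ) :
    softThr (τ * n) (θ * τ) = τ * softThr n θ := by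
  unfold softThr
  rcases le_or_gt θ n with h | h
  · rw [if_pos (by nlinarith), if_pos h]; ring
  · rw [if_neg (by nlinarith)]
    rcases le_or_gt n (-θ) with h2 | h2
    · rw [if_pos (by nlinarith), if_neg (by nlinarith), if_pos h2]; ring
    · rw [if_neg (by nlinarith), if_neg (by nlinarith), if_neg (by nlinarith)]; ring

lemma softThr_sub_le {θ : ℝ} (hθ : 0 ≤ θ) (y : ℝ) : |softThr y θ - y| ≤ θ := by
  unfold softThr
  rcases le_or_gt θ y with h | h
  · rw [if_pos h]; simp [abs_of_nonpos, hθ]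
  · rw [if_neg (not_le.mpr h)]
    rcases le_or_gt y (-θ) with h2 | h2
    · rw [if_pos h2]; simp [abs_of_nonneg, hθ]
    · rw [if_neg (not_le.mpr h2), zero_sub, abs_neg]
      exact abs_le.mpr ⟨by linarith, by linarith⟩

noncomputable def nu : Measure ℝ := gaussianReal 0 1

lemma nu_eq : nu = MeasureTheory.Measure.withDensity volume
    (fun x => ENNReal.ofReal (stdGaussPdf x)) := by
  unfold nu
  rw [gaussianReal_of_var_ne_zero 0 one_ne_zero]
  congr 1
  funext x
  rw [gaussianPDF]
  congr 1
  rw [gaussianPDFReal]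
  unfold stdGaussPdf
  norm_num

lemma integral_nu (f : ℝ → ℝ) : ∫ x, f x ∂nu = ∫ x, f x * stdGaussPdf x := by
  rw [nu_eq]
  have : (fun x => ENNReal.ofReal (stdGaussPdf x))
      = (fun x => ((fun x => (stdGaussPdf x).toNNReal) x : ℝ≥0∞)) := by
    funext x; simp [ENNReal.ofReal]
  rw [this, integral_withDensity_eq_integral_smul
    (by exact (measurable_real_toNNReal.comp pdf_cont.measurable)) f]
  congr 1
  funext x
  simp [NNReal.smul_def, Real.coe_toNNReal _ (pdf_nonneg x)]
  ring

lemma integrable_nu_iff {f : ℝ → ℝ} (hf : AEStronglyMeasurable f (volume : Measure ℝ)) :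
    Integrable f nu ↔ Integrable (fun x => f x * stdGaussPdf x) := by
  rw [nu_eq]
  rw [integrable_withDensity_iff (f := fun x => ENNReal.ofReal (stdGaussPdf x))
    (ENNReal.measurable_ofReal.comp pdf_cont.measurable)
    (ae_of_all _ fun x => ENNReal.ofReal_lt_top)]
  constructor <;> intro h <;> apply h.congr <;>
    · filter_upwards with x
      rw [ENNReal.toReal_ofReal (pdf_nonneg x)]

instance : IsProbabilityMeasure nu := by unfold nu; infer_instance

lemma integrable_bound_nu (c : ℝ) : Integrable (fun n => (c + |n|)^2) nu := by
  rw [integrable_nu_iff (f := fun n => (c + |n|)^2) ((continuous_const.add continuous_abs).pow 2).aestronglyMeasurable]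
  have h : Integrable (fun x => (c^2) * stdGaussPdf x + (2*c) * (|x| * stdGaussPdf x)
      + x^2 * stdGaussPdf x) := by
    apply Integrable.add (Integrable.add ?_ ?_) integrable_sq_mul_pdf
    · exact integrable_pdf.const_mul _
    · apply Integrable.const_mul
      apply integrable_mul_pdf.abs.congr
      filter_upwards with x
      rw [abs_mul, abs_of_nonneg (pdf_nonneg x)]
  apply h.congr
  filter_upwards with x
  have hx : x ^ 2 = |x| ^ 2 := (sq_abs x).symm
  rw [hx]; ring

lemma integrable_shift_nu (a : ℝ) : Integrable (fun n => (n - a)^2) nu := by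
  have h := integrable_bound_nu (|a|)
  apply h.mono ((continuous_id.sub continuous_const).pow 2).aestronglyMeasurable
  filter_upwards with x
  show ‖(x - a)^2‖ ≤ ‖(|a| + |x|)^2‖
  rw [Real.norm_of_nonneg (by positivity), Real.norm_of_nonneg (by positivity)]
  have h1 : |x - a| ≤ |a| + |x| := by
    calc |x - a| ≤ |x| + |a| := abs_sub _ _
    _ = |a| + |x| := by ring
  calc (x-a)^2 = |x-a|^2 := (sq_abs _).symm
  _ ≤ (|a| + |x|)^2 := by apply pow_le_pow_left₀ (abs_nonneg _) h1
  _ = (|a| + |x|)^2 := rfl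

lemma moment_shift_nu (a : ℝ) : ∫ n, (n - a)^2 ∂nu = 1 + a^2 := by
  rw [integral_nu]
  have : (fun n => (n - a)^2 * stdGaussPdf n)
      = fun n => (n^2 * stdGaussPdf n - (2*a) * (n * stdGaussPdf n)) + a^2 * stdGaussPdf n := by
    funext n; ring
  have h1 : Integrable (fun n : ℝ => n^2 * stdGaussPdf n - 2*a*(n*stdGaussPdf n)) := by
    apply (integrable_sq_mul_pdf.sub (integrable_mul_pdf.const_mul (2*a))).congr
    filter_upwards with x
    simp [Pi.sub_apply]
  rw [this, integral_add h1 (integrable_pdf.const_mul _),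
    integral_sub integrable_sq_mul_pdf (integrable_mul_pdf.const_mul _),
    integral_const_mul, integral_const_mul, moment_two, _root_.moment_one, integral_pdf]
  ring

lemma softThr_sq_eq {a : ℝ} (ha : 0 < a) (n : ℝ) :
    (softThr n a)^2 * stdGaussPdf n
      = Set.indicator (Ici a) (fun n => (n - a)^2 * stdGaussPdf n) n
        + Set.indicator (Iic (-a)) (fun n => (n + a)^2 * stdGaussPdf n) n := by
  unfold softThr
  rcases le_or_gt a n with h | h
  · rw [if_pos h, Set.indicator_of_mem (Set.mem_Ici.mpr h), Set.indicator_of_notMem (by simp; linarith)]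
    ring
  · rw [if_neg (not_le.mpr h), Set.indicator_of_notMem (by simpa using h)]
    rcases le_or_gt n (-a) with h2 | h2
    · rw [if_pos h2, Set.indicator_of_mem (Set.mem_Iic.mpr h2)]; ring
    · rw [if_neg (not_le.mpr h2), Set.indicator_of_notMem (by simpa using h2)]; ring

lemma softThr_moment {a : ℝ} (ha : 0 < a) :
    ∫ n, (softThr n a)^2 ∂nu
      = 2 * ((1 + a^2) * stdGaussCdf (-a) - a * stdGaussPdf a) := by
  rw [integral_nu]
  rw [show (fun n => (softThr n a)^2 * stdGaussPdf n) = fun n =>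
      Set.indicator (Ici a) (fun n => (n - a)^2 * stdGaussPdf n) n
        + Set.indicator (Iic (-a)) (fun n => (n + a)^2 * stdGaussPdf n) n from
    funext (softThr_sq_eq ha)]
  rw [integral_add ((integrable_shift_sq_mul_pdf a).indicator measurableSet_Ici)
    (((integrable_shift_sq_mul_pdf (-a)).congr (ae_of_all _ fun x => by
      ring_nf)).indicator measurableSet_Iic)]
  rw [integral_indicator measurableSet_Ici, integral_indicator measurableSet_Iic]
  rw [integral_Ici_eq_integral_Ioi, tail_right a, tail_left a, cdf_neg]
  ring

lemma measurable_inner (x τ αv : ℝ) :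
    Measurable (fun n : ℝ => (softThr (x + τ * n) (αv * τ) - x)^2) :=
  ((measurable_softThr (measurable_const.add (measurable_id.const_mul τ)) _).sub
    measurable_const).pow_const 2

lemma inner_abs_le {αv τ : ℝ} (hα : 0 < αv) (hτ : 0 < τ) (x n : ℝ) :
    |softThr (x + τ * n) (αv * τ) - x| ≤ (αv + |n|) * τ := by
  have h0 : |softThr (x + τ * n) (αv * τ) - x|
      ≤ |softThr (x + τ * n) (αv * τ) - (x + τ * n)| + |(x + τ * n) - x| :=
    abs_sub_le _ _ _
  have h1 : |softThr (x + τ * n) (αv * τ) - (x + τ * n)| ≤ αv * τ :=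
    softThr_sub_le (by positivity) _
  have h2 : |(x + τ * n) - x| = τ * |n| := by
    rw [add_sub_cancel_left, abs_mul, abs_of_pos hτ]
  calc |softThr (x + τ * n) (αv * τ) - x| ≤ αv * τ + τ * |n| := by
        rw [← h2]; exact h0.trans (add_le_add_left h1 _)
    _ = (αv + |n|) * τ := by ring

lemma inner_sq_le {αv τ : ℝ} (hα : 0 < αv) (hτ : 0 < τ) (x n : ℝ) :
    ((softThr (x + τ * n) (αv * τ) - x) / τ)^2 ≤ (αv + |n|)^2 := by
  have h2 : |(softThr (x + τ * n) (αv * τ) - x) / τ| ≤ αv + |n| := by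
    rw [abs_div, abs_of_pos hτ, div_le_iff₀ hτ]
    exact inner_abs_le hα hτ x n
  calc ((softThr (x + τ * n) (αv * τ) - x) / τ)^2
      = |(softThr (x + τ * n) (αv * τ) - x) / τ|^2 := (sq_abs _).symm
    _ ≤ (αv + |n|)^2 := pow_le_pow_left₀ (abs_nonneg _) h2 2

lemma inner_tendsto {αv : ℝ} (hα : 0 < αv) {x : ℝ} (hx : x ≠ 0) :
    Tendsto (fun τ : ℝ => (∫ n, (softThr (x + τ * n) (αv * τ) - x)^2 ∂nu) / τ^2)
      (𝓝[>] 0) (𝓝 (1 + αv^2)) := by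
  have key : Tendsto (fun τ : ℝ => ∫ n, ((softThr (x + τ * n) (αv * τ) - x) / τ)^2 ∂nu)
      (𝓝[>] 0) (𝓝 (1 + αv^2)) := by
    have hmeas : ∀ᶠ τ in 𝓝[>](0:ℝ),
        AEStronglyMeasurable (fun n : ℝ => ((softThr (x + τ * n) (αv * τ) - x) / τ)^2) nu := by
      filter_upwards with τ
      exact (((measurable_softThr (measurable_const.add (measurable_id.const_mul τ)) _).sub
        measurable_const).div_const τ |>.pow_const 2).aestronglyMeasurable
    have hbound : ∀ᶠ τ in 𝓝[>](0:ℝ), ∀ᵐ n ∂nu,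
        ‖((softThr (x + τ * n) (αv * τ) - x) / τ)^2‖ ≤ (αv + |n|)^2 := by
      filter_upwards [self_mem_nhdsWithin] with τ hτ
      filter_upwards with n
      rw [Real.norm_of_nonneg (by positivity)]
      exact inner_sq_le hα hτ x n
    rcases hx.lt_or_gt with hneg | hpos
    · have hLint : ∫ n, (n + αv)^2 ∂nu = 1 + αv^2 := by
        have h := moment_shift_nu (-αv)
        simp_rw [sub_neg_eq_add] at h
        rw [neg_sq] at h
        exact h
      rw [← hLint]
      apply tendsto_integral_filter_of_dominated_convergence _ hmeas hbound
        (integrable_bound_nu αv)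
      filter_upwards with n
      have hδ : 0 < (-x) / (αv + |n| + 1) := div_pos (neg_pos.mpr hneg) (by positivity)
      apply (tendsto_congr' _).mpr (tendsto_const_nhds (α := ℝ))
      filter_upwards [Ioo_mem_nhdsGT_of_mem (Set.left_mem_Ico.mpr hδ)] with τ hτm
      obtain ⟨hτ0, hτδ⟩ := hτm
      have hτα : τ * (αv + |n|) < -x := by
        have h3 : τ * (αv + |n| + 1) < -x := by
          rw [lt_div_iff₀ (by positivity)] at hτδ
          linarith
        nlinarith
      have hn : τ * n ≤ τ * |n| := mul_le_mul_of_nonneg_left (le_abs_self n) hτ0.le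
      have harg : x + τ * n ≤ -(αv * τ) := by nlinarith
      have hlt : ¬ (αv * τ ≤ x + τ * n) := by nlinarith [mul_pos hα hτ0]
      rw [show softThr (x + τ * n) (αv * τ) = x + τ * n + αv * τ by
        unfold softThr; rw [if_neg hlt, if_pos harg]]
      rw [show (x + τ * n + αv * τ - x) / τ = n + αv by field_simp; ring]
    · have hLint : ∫ n, (n - αv)^2 ∂nu = 1 + αv^2 := moment_shift_nu αv
      rw [← hLint]
      apply tendsto_integral_filter_of_dominated_convergence _ hmeas hbound
        (integrable_bound_nu αv)
      filter_upwards with n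
      have hδ : 0 < x / (αv + |n| + 1) := div_pos hpos (by positivity)
      apply (tendsto_congr' _).mpr (tendsto_const_nhds (α := ℝ))
      filter_upwards [Ioo_mem_nhdsGT_of_mem (Set.left_mem_Ico.mpr hδ)] with τ hτm
      obtain ⟨hτ0, hτδ⟩ := hτm
      have hτα : τ * (αv + |n|) < x := by
        have h3 : τ * (αv + |n| + 1) < x := by
          rw [lt_div_iff₀ (by positivity)] at hτδ
          linarith
        nlinarith
      have hn : -(τ * |n|) ≤ τ * n := by
        have := mul_le_mul_of_nonneg_left (neg_abs_le n) hτ0.le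
        linarith [this]
      have harg : αv * τ ≤ x + τ * n := by nlinarith
      rw [show softThr (x + τ * n) (αv * τ) = x + τ * n - αv * τ by
        unfold softThr; rw [if_pos harg]]
      rw [show (x + τ * n - αv * τ - x) / τ = n - αv by field_simp; ring]
  apply key.congr
  intro τ
  simp_rw [div_pow, integral_div]

lemma integrable_comp_snd {m : Measure ℝ} [IsProbabilityMeasure m] {f : ℝ → ℝ}
    (hfm : Measurable f) (hf : Integrable f nu) :
    Integrable (fun p : ℝ × ℝ => f p.2) (m.prod nu) := by
  have h : Integrable f (Measure.map Prod.snd (m.prod nu)) := by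
    rw [Measure.map_snd_prod, measure_univ, one_smul]; exact hf
  rwa [integrable_map_measure hfm.aestronglyMeasurable measurable_snd.aemeasurable] at h

lemma integrable_inner_nu {αv τ : ℝ} (hα : 0 < αv) (hτ : 0 < τ) (x : ℝ) :
    Integrable (fun n : ℝ => (softThr (x + τ * n) (αv * τ) - x)^2) nu := by
  have hb : Integrable (fun n : ℝ => ((αv + |n|) * τ)^2) nu := by
    have := (integrable_bound_nu αv).const_mul (τ^2)
    apply this.congr
    filter_upwards with n
    ring
  apply hb.mono (measurable_inner x τ αv).aestronglyMeasurable
  filter_upwards with n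
  rw [Real.norm_of_nonneg (by positivity), Real.norm_of_nonneg (by positivity)]
  calc (softThr (x + τ * n) (αv * τ) - x)^2 = |softThr (x + τ * n) (αv * τ) - x|^2 :=
        (sq_abs _).symm
    _ ≤ ((αv + |n|) * τ)^2 := pow_le_pow_left₀ (abs_nonneg _) (inner_abs_le hα hτ x n) 2

lemma inner_le {αv τ : ℝ} (hα : 0 < αv) (hτ : 0 < τ) (x : ℝ) :
    ∫ n, (softThr (x + τ * n) (αv * τ) - x)^2 ∂nu
      ≤ τ^2 * ∫ n, (αv + |n|)^2 ∂nu := by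
  have hb : Integrable (fun n : ℝ => τ^2 * (αv + |n|)^2) nu := (integrable_bound_nu αv).const_mul _
  calc ∫ n, (softThr (x + τ * n) (αv * τ) - x)^2 ∂nu
      ≤ ∫ n, τ^2 * (αv + |n|)^2 ∂nu := by
        apply integral_mono (integrable_inner_nu hα hτ x) hb
        intro n
        calc (softThr (x + τ * n) (αv * τ) - x)^2 = |softThr (x + τ * n) (αv * τ) - x|^2 :=
              (sq_abs _).symm
          _ ≤ ((αv + |n|) * τ)^2 := pow_le_pow_left₀ (abs_nonneg _) (inner_abs_le hα hτ x n) 2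
          _ = τ^2 * (αv + |n|)^2 := by ring
    _ = τ^2 * ∫ n, (αv + |n|)^2 ∂nu := integral_const_mul _ _

/-- Let `X ∼ (1−γ)δ₀ + γQ` with `Q({0}) = 0`, let `N` be standard normal
independent of `X`, and `α > 0`. Then as `τ → 0⁺`,
`τ⁻² E[(η(X + τN; ατ) − X)²] → γ(1+α²) + 2(1−γ)((1+α²)Φ(−α) − αφ(α))`; in particular
`E[η(τN; ατ)²] = 2τ²((1+α²)Φ(−α) − αφ(α))` for every `τ > 0`. -/
theorem stmt19 {Ω : Type*} [MeasurableSpace Ω] (μ : Measure Ω) [IsProbabilityMeasure μ]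
    (γ : ℝ) (hγ0 : 0 ≤ γ) (hγ1 : γ ≤ 1)
    (Q : Measure ℝ) [IsProbabilityMeasure Q] (hQ : Q {0} = 0)
    (X N : Ω → ℝ) (hX : Measurable X) (hN : Measurable N)
    -- `X ∼ (1−γ)δ₀ + γQ` and `N ∼ N(0,1)` are independent
    (hlaw : Measure.map (fun ω => (X ω, N ω)) μ
      = (ENNReal.ofReal (1 - γ) • Measure.dirac (0 : ℝ) + ENNReal.ofReal γ • Q).prod
          (gaussianReal 0 1))
    (α : ℝ) (hα : 0 < α) :
    Filter.Tendsto
      (fun τ : ℝ => (∫ ω, (softThr (X ω + τ * N ω) (α * τ) - X ω) ^ 2 ∂μ) / τ ^ 2)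
      (𝓝[>] 0)
      (nhds (γ * (1 + α ^ 2) +
        2 * (1 - γ) * ((1 + α ^ 2) * stdGaussCdf (-α) - α * stdGaussPdf α))) ∧
    ∀ τ : ℝ, 0 < τ →
      ∫ ω, (softThr (τ * N ω) (α * τ)) ^ 2 ∂μ
        = 2 * τ ^ 2 * ((1 + α ^ 2) * stdGaussCdf (-α) - α * stdGaussPdf α) := by
  set C : ℝ := (1 + α ^ 2) * stdGaussCdf (-α) - α * stdGaussPdf α with hC
  set m : Measure ℝ := ENNReal.ofReal (1 - γ) • Measure.dirac (0 : ℝ) + ENNReal.ofReal γ • Q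
    with hm
  have hpair : Measurable (fun ω => (X ω, N ω)) := hX.prodMk hN
  have hmuniv : m Set.univ = 1 := by
    rw [hm]
    simp only [Measure.add_apply, Measure.smul_apply, smul_eq_mul, measure_univ, mul_one]
    rw [← ENNReal.ofReal_add (by linarith) hγ0]
    norm_num
  haveI hmprob : IsProbabilityMeasure m := ⟨hmuniv⟩
  have hlaw' : Measure.map (fun ω => (X ω, N ω)) μ = m.prod nu := hlaw
  have hNlaw : Measure.map N μ = nu := by
    have hcomp : N = Prod.snd ∘ (fun ω => (X ω, N ω)) := rfl
    rw [hcomp, ← Measure.map_map measurable_snd hpair, hlaw', Measure.map_snd_prod, hmuniv,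
      one_smul]
  -- second conjunct
  have conj2 : ∀ τ : ℝ, 0 < τ →
      ∫ ω, (softThr (τ * N ω) (α * τ)) ^ 2 ∂μ = 2 * τ ^ 2 * C := by
    intro τ hτ
    have hmeasf : Measurable fun n : ℝ => (softThr (τ * n) (α * τ))^2 :=
      (measurable_softThr (measurable_id.const_mul τ) _).pow_const 2
    have h := integral_map (μ := μ) hN.aemeasurable hmeasf.aestronglyMeasurable
    rw [hNlaw] at h
    rw [← h]
    simp_rw [softThr_scale hτ, mul_pow]
    rw [integral_const_mul, softThr_moment hα]
    ring
  refine ⟨?_, conj2⟩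
  -- first conjunct
  set K : ℝ := ∫ n, (α + |n|)^2 ∂nu with hK
  set I : ℝ → ℝ → ℝ := fun τ x => ∫ n, (softThr (x + τ * n) (α * τ) - x)^2 ∂nu with hI
  have hImeas : ∀ τ : ℝ, StronglyMeasurable (fun x => I τ x) := by
    intro τ
    have hG : Measurable (fun p : ℝ × ℝ => (softThr (p.1 + τ * p.2) (α * τ) - p.1)^2) :=
      ((measurable_softThr (measurable_fst.add (measurable_snd.const_mul τ)) _).sub
        measurable_fst).pow_const 2
    exact hG.stronglyMeasurable.integral_prod_right'
  have hInonneg : ∀ τ x, 0 ≤ I τ x := fun τ x => integral_nonneg (fun n => by positivity)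
  have hIle : ∀ τ : ℝ, 0 < τ → ∀ x, I τ x ≤ τ^2 * K := fun τ hτ x => inner_le hα hτ x
  have hrw : ∀ τ : ℝ, 0 < τ →
      (∫ ω, (softThr (X ω + τ * N ω) (α * τ) - X ω)^2 ∂μ)
        = (1 - γ) * (τ^2 * (2 * C)) + γ * ∫ x, I τ x ∂Q := by
    intro τ hτ
    have hG : Measurable (fun p : ℝ × ℝ => (softThr (p.1 + τ * p.2) (α * τ) - p.1)^2) :=
      ((measurable_softThr (measurable_fst.add (measurable_snd.const_mul τ)) _).sub
        measurable_fst).pow_const 2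
    have h1 : ∫ ω, (softThr (X ω + τ * N ω) (α * τ) - X ω)^2 ∂μ
        = ∫ p : ℝ × ℝ, (softThr (p.1 + τ * p.2) (α * τ) - p.1)^2 ∂(m.prod nu) := by
      rw [← hlaw', integral_map hpair.aemeasurable hG.aestronglyMeasurable]
    have hbound_prod : Integrable (fun p : ℝ × ℝ => ((α + |p.2|) * τ)^2) (m.prod nu) := by
      have hb : Integrable (fun n : ℝ => ((α + |n|) * τ)^2) nu := by
        have := (integrable_bound_nu α).const_mul (τ^2)
        apply this.congr
        filter_upwards with n
        ring
      exact integrable_comp_snd (by fun_prop) hb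
    have hGint : Integrable (fun p : ℝ × ℝ => (softThr (p.1 + τ * p.2) (α * τ) - p.1)^2)
        (m.prod nu) := by
      apply hbound_prod.mono hG.aestronglyMeasurable
      filter_upwards with p
      rw [Real.norm_of_nonneg (by positivity), Real.norm_of_nonneg (by positivity)]
      calc (softThr (p.1 + τ * p.2) (α * τ) - p.1)^2
          = |softThr (p.1 + τ * p.2) (α * τ) - p.1|^2 := (sq_abs _).symm
        _ ≤ ((α + |p.2|) * τ)^2 := pow_le_pow_left₀ (abs_nonneg _) (inner_abs_le hα hτ p.1 p.2) 2
    have h2 : ∫ p : ℝ × ℝ, (softThr (p.1 + τ * p.2) (α * τ) - p.1)^2 ∂(m.prod nu)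
        = ∫ x, I τ x ∂m := MeasureTheory.integral_prod _ hGint
    have hI0 : I τ 0 = τ^2 * (2 * C) := by
      rw [hI]
      simp only [zero_add, sub_zero]
      simp_rw [softThr_scale hτ, mul_pow]
      rw [integral_const_mul, softThr_moment hα]
    -- decompose the measure m
    haveI hfin1 : IsFiniteMeasure (ENNReal.ofReal (1 - γ) • Measure.dirac (0 : ℝ)) := by
      constructor
      simp only [Measure.smul_apply, smul_eq_mul, measure_univ, mul_one]
      exact ENNReal.ofReal_lt_top
    haveI hfin2 : IsFiniteMeasure (ENNReal.ofReal γ • Q) := by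
      constructor
      simp only [Measure.smul_apply, smul_eq_mul, measure_univ, mul_one]
      exact ENNReal.ofReal_lt_top
    have hIint : ∀ (ρ : Measure ℝ) [IsFiniteMeasure ρ], Integrable (fun x => I τ x) ρ := by
      intro ρ hρ
      apply (integrable_const (τ^2 * K)).mono' (hImeas τ).aestronglyMeasurable
      filter_upwards with x
      rw [Real.norm_of_nonneg (hInonneg τ x)]
      exact hIle τ hτ x
    have h3 : ∫ x, I τ x ∂m = (1 - γ) * I τ 0 + γ * ∫ x, I τ x ∂Q := by
      rw [hm, integral_add_measure (hIint _) (hIint _), integral_smul_measure,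
        integral_smul_measure, integral_dirac, ENNReal.toReal_ofReal (by linarith),
        ENNReal.toReal_ofReal hγ0, smul_eq_mul, smul_eq_mul]
    rw [h1, h2, h3, hI0]
  -- the limit
  have hQae : ∀ᵐ x ∂Q, x ≠ (0:ℝ) := by
    rw [ae_iff]
    convert hQ using 2
    simp
  have htend : Tendsto (fun τ : ℝ => (∫ x, I τ x ∂Q) / τ^2) (𝓝[>] 0) (𝓝 (1 + α^2)) := by
    have hint1 : (1 + α^2 : ℝ) = ∫ _ : ℝ, (1 + α^2 : ℝ) ∂Q := by simp
    rw [hint1]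
    have heq : ∀ τ : ℝ, (∫ x, I τ x ∂Q) / τ^2 = ∫ x, I τ x / τ^2 ∂Q := fun τ =>
      (integral_div _ _).symm
    simp_rw [heq]
    apply tendsto_integral_filter_of_dominated_convergence (fun _ => K)
    · filter_upwards with τ
      exact (((hImeas τ).measurable.div_const (τ^2)).aestronglyMeasurable)
    · filter_upwards [self_mem_nhdsWithin] with τ (hτ : (0:ℝ) < τ)
      filter_upwards with x
      rw [Real.norm_of_nonneg (by positivity)]
      rw [div_le_iff₀ (by positivity)]
      calc I τ x ≤ τ^2 * K := hIle τ hτ x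
        _ = K * τ^2 := by ring
    · exact integrable_const K
    · filter_upwards [hQae] with x hx
      exact inner_tendsto hα hx
  have hfinal : Tendsto (fun τ : ℝ => (1 - γ) * (2 * C) + γ * ((∫ x, I τ x ∂Q) / τ^2))
      (𝓝[>] 0) (𝓝 ((1 - γ) * (2 * C) + γ * (1 + α^2))) :=
    tendsto_const_nhds.add (htend.const_mul γ)
  have hgoal : γ * (1 + α ^ 2) + 2 * (1 - γ) * C = (1 - γ) * (2 * C) + γ * (1 + α^2) := by ring
  rw [hgoal]
  apply hfinal.congr'
  filter_upwards [self_mem_nhdsWithin] with τ (hτ : (0:ℝ) < τ)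
  rw [hrw τ hτ]
  field_simp
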